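/- arXiv:2511.07952 — 7 statements merged into one kernel-verified Lean document; each statement's English description precedes it below -/
import Mathlib

section
/- The transfer system closure of a set M of morphisms in a finite lattice can be constructed explicitly in two stages: first form M₁ = { (k ∧ l, l) : (k,h) ∈ M, l ≤ h } ∪ {identities}, then form M₂ = all finite composites of elements of M₁. Then M₂ equals ⟨M⟩, the smallest transfer system containing M; in particular, closing under restriction first and then composition already yields a set closed under restriction. -/
/-- A transfer system on a lattice. -/
def IsTransferSystem {L : Type*} [Lattice L] (T : Set (L × L)) : Prop :=
  (∀ p ∈ T, p.1 ≤ p.2) ∧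
  (∀ x : L, (x, x) ∈ T) ∧
  (∀ x y z : L, (x, y) ∈ T → (y, z) ∈ T → (x, z) ∈ T) ∧
  (∀ x y z : L, (x, y) ∈ T → z ≤ y → (x ⊓ z, z) ∈ T)

/-- Explicit two-stage construction of the transfer system closure in a finite
lattice: first close under restriction (adding identities), then close under
finite composition.  The result is the smallest transfer system containing `M`. -/
theorem transferSystem_closure_two_stages {L : Type*} [Lattice L] [Fintype L]
    (M : Set (L × L)) (hM : ∀ p ∈ M, p.1 ≤ p.2) :
    ∀ M₁ M₂ : Set (L × L),
      M₁ = {p : L × L | (∃ k h, (k, h) ∈ M ∧ p.2 ≤ h ∧ p.1 = k ⊓ p.2) ∨ p.1 = p.2} →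
      M₂ = {p : L × L | Relation.ReflTransGen (fun a b => (a, b) ∈ M₁) p.1 p.2} →
      IsTransferSystem M₂ ∧ M ⊆ M₂ ∧
        ∀ T : Set (L × L), IsTransferSystem T → M ⊆ T → M₂ ⊆ T := by
  intro M₁ M₂ h1 h2
  have hr : ∀ a b : L, (a, b) ∈ M₁ ↔
      ((∃ k h, (k, h) ∈ M ∧ b ≤ h ∧ a = k ⊓ b) ∨ a = b) := by
    intro a b; rw [h1]; rfl
  have hm2 : ∀ a b : L, (a, b) ∈ M₂ ↔
      Relation.ReflTransGen (fun a b => (a, b) ∈ M₁) a b := by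
    intro a b; rw [h2]; rfl
  set r : L → L → Prop := fun a b => (a, b) ∈ M₁ with hrdef
  have hM₁le : ∀ a b : L, r a b → a ≤ b := by
    intro a b hab
    rcases (hr a b).mp hab with ⟨k, h, _, _, heq⟩ | heq
    · rw [heq]; exact inf_le_right
    · exact le_of_eq heq
  have hrle : ∀ a b : L, Relation.ReflTransGen r a b → a ≤ b := by
    intro a b hab
    induction hab with
    | refl => exact le_refl a
    | tail _ hbc ih => exact ih.trans (hM₁le _ _ hbc)
  have key : ∀ a b : L, Relation.ReflTransGen r a b → ∀ z : L, z ≤ b →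
      Relation.ReflTransGen r (a ⊓ z) z := by
    intro a b hab
    induction hab with
    | refl =>
      intro z hz
      rw [inf_eq_right.mpr hz]
    | @tail b c hab hbc ih =>
      intro z hz
      rcases (hr b c).mp hbc with ⟨k, h, hkh, hch, heq⟩ | heq
      · have hkz : k ⊓ z ≤ b := by
          rw [heq]; exact inf_le_inf_left k hz
        have step : r (k ⊓ z) z :=
          (hr _ _).mpr (Or.inl ⟨k, h, hkh, hz.trans hch, rfl⟩)
        have h3 := (ih (k ⊓ z) hkz).tail step
        have hak : a ≤ k := (hrle a b hab).trans (heq ▸ inf_le_left)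
        have h4 : a ⊓ (k ⊓ z) = a ⊓ z := by
          rw [← inf_assoc, inf_eq_left.mpr hak]
        rwa [h4] at h3
      · exact ih z (heq ▸ hz)
  refine ⟨⟨?_, ?_, ?_, ?_⟩, ?_, ?_⟩
  · intro p hp
    exact hrle p.1 p.2 ((hm2 p.1 p.2).mp hp)
  · intro x
    exact (hm2 x x).mpr Relation.ReflTransGen.refl
  · intro x y z hxy hyz
    exact (hm2 x z).mpr (((hm2 x y).mp hxy).trans ((hm2 y z).mp hyz))
  · intro x y z hxy hz
    exact (hm2 _ _).mpr (key x y ((hm2 x y).mp hxy) z hz)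
  · intro p hp
    refine (hm2 p.1 p.2).mpr (Relation.ReflTransGen.single ?_)
    exact (hr _ _).mpr (Or.inl ⟨p.1, p.2, hp, le_refl _, (inf_eq_left.mpr (hM p hp)).symm⟩)
  · intro T hT hMT p hp
    obtain ⟨hTle, hTrefl, hTtrans, hTres⟩ := hT
    have hM₁T : ∀ a b : L, r a b → (a, b) ∈ T := by
      intro a b hab
      rcases (hr a b).mp hab with ⟨k, h, hkh, hbh, heq⟩ | heq
      · rw [heq]
        exact hTres k h b (hMT hkh) hbh
      · rw [heq]; exact hTrefl b
    have main : ∀ a b : L, Relation.ReflTransGen r a b → (a, b) ∈ T := by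
      intro a b hab
      induction hab with
      | refl => exact hTrefl a
      | @tail b c _ hbc ih => exact hTtrans a b c ih (hM₁T b c hbc)
    exact main p.1 p.2 ((hm2 p.1 p.2).mp hp)
end

section
/- There are exactly ten transfer systems on the lattice [1] × [1] (the product of two two-element chains, i.e. the Boolean lattice of rank 2). -/
namespace TS

abbrev A := Fin 2 × Fin 2
abbrev V := Bool × Bool × Bool × Bool × Bool

def q1 : A × A := ((0,0),(1,0))
def q2 : A × A := ((0,0),(0,1))
def q3 : A × A := ((0,0),(1,1))
def q4 : A × A := ((1,0),(1,1))
def q5 : A × A := ((0,1),(1,1))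

def memV (v : V) (p : A × A) : Prop :=
  p.1 = p.2 ∨ (v.1 = true ∧ p = q1) ∨ (v.2.1 = true ∧ p = q2) ∨
    (v.2.2.1 = true ∧ p = q3) ∨ (v.2.2.2.1 = true ∧ p = q4) ∨ (v.2.2.2.2 = true ∧ p = q5)

instance (v : V) (p : A × A) : Decidable (memV v p) := by unfold memV; infer_instance

def setV (v : V) : Set (A × A) := {p | memV v p}

instance (v : V) (p : A × A) : Decidable (p ∈ setV v) :=
  inferInstanceAs (Decidable (memV v p))

def Q (v : V) : Prop := IsTransferSystem (setV v)

instance : DecidablePred Q := fun v => by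
  unfold Q IsTransferSystem; infer_instance

open Classical in
noncomputable def extract (T : Set (A × A)) : V :=
  (decide (q1 ∈ T), decide (q2 ∈ T), decide (q3 ∈ T), decide (q4 ∈ T), decide (q5 ∈ T))

lemma key {T : Set (A × A)} (hT : IsTransferSystem T) : setV (extract T) = T := by
  ext p
  simp only [setV, extract, Set.mem_setOf_eq, memV, decide_eq_true_eq]
  constructor
  · rintro (h | ⟨h, rfl⟩ | ⟨h, rfl⟩ | ⟨h, rfl⟩ | ⟨h, rfl⟩ | ⟨h, rfl⟩)
    · obtain ⟨a, b⟩ := p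
      simp only at h
      subst h
      exact hT.2.1 a
    all_goals exact h
  · intro h
    have hle := hT.1 p h
    obtain ⟨a, b⟩ := p
    fin_cases a <;> fin_cases b <;>
      first
        | exact Or.inl rfl
        | exact Or.inr (Or.inl ⟨h, rfl⟩)
        | exact Or.inr (Or.inr (Or.inl ⟨h, rfl⟩))
        | exact Or.inr (Or.inr (Or.inr (Or.inl ⟨h, rfl⟩)))
        | exact Or.inr (Or.inr (Or.inr (Or.inr (Or.inl ⟨h, rfl⟩))))
        | exact Or.inr (Or.inr (Or.inr (Or.inr (Or.inr ⟨h, rfl⟩))))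
        | exact absurd hle (by decide)

noncomputable def f (v : {v : V // Q v}) :
    {T : Set ((Fin 2 × Fin 2) × (Fin 2 × Fin 2)) // IsTransferSystem T} :=
  ⟨setV v.1, v.2⟩

lemma f_bij : Function.Bijective f := by
  constructor
  · rintro ⟨v, hv⟩ ⟨w, hw⟩ h
    have h' : setV v = setV w := congrArg Subtype.val h
    have h'' : ∀ p, memV v p ↔ memV w p := fun p => Set.ext_iff.mp h' p
    have : ∀ v w : V, (∀ p, memV v p ↔ memV w p) → v = w := by decide
    exact Subtype.ext (this v w h'')
  · rintro ⟨T, hT⟩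
    refine ⟨⟨extract T, ?_⟩, ?_⟩
    · show IsTransferSystem (setV (extract T))
      rw [key hT]; exact hT
    · exact Subtype.ext (key hT)

end TS

/-- There are exactly ten transfer systems on the lattice `[1] × [1]`
(the product of two two-element chains). -/
theorem card_transferSystems_square :
    Nat.card {T : Set ((Fin 2 × Fin 2) × (Fin 2 × Fin 2)) // IsTransferSystem T} = 10 := by
  rw [← Nat.card_congr (Equiv.ofBijective _ TS.f_bij)]
  rw [Nat.card_eq_fintype_card]
  decide
end

section
/- In any model structure on a poset category, the class of weak equivalences is decomposable: if x ≤ y ≤ z and the morphism x → z is a weak equivalence, then both x → y and y → z are weak equivalences. -/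
/-- A model structure on a lattice `P` viewed as a poset category: classes of
weak equivalences `W`, fibrations `F` and cofibrations `C` (as sets of pairs
`(x,y)` with `x ≤ y`), satisfying the model category axioms.  Retract closure
is automatic in a poset.  Lifting (MC4) and factorization (MC5) are stated
with acyclic (co)fibrations given by the intersections `W ∩ C` and `W ∩ F`. -/
structure LatticeModelStructure (P : Type*) [Lattice P] where
  W : Set (P × P)
  F : Set (P × P)
  C : Set (P × P)
  W_le : ∀ p ∈ W, p.1 ≤ p.2
  F_le : ∀ p ∈ F, p.1 ≤ p.2
  C_le : ∀ p ∈ C, p.1 ≤ p.2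
  W_id : ∀ x : P, (x, x) ∈ W
  F_id : ∀ x : P, (x, x) ∈ F
  C_id : ∀ x : P, (x, x) ∈ C
  F_comp : ∀ x y z : P, (x, y) ∈ F → (y, z) ∈ F → (x, z) ∈ F
  C_comp : ∀ x y z : P, (x, y) ∈ C → (y, z) ∈ C → (x, z) ∈ C
  /-- MC2, two-out-of-three: composition. -/
  W_comp : ∀ x y z : P, x ≤ y → y ≤ z → (x, y) ∈ W → (y, z) ∈ W → (x, z) ∈ W
  /-- MC2, two-out-of-three: left cancellation. -/
  W_cancel_left : ∀ x y z : P, x ≤ y → y ≤ z → (x, z) ∈ W → (y, z) ∈ W → (x, y) ∈ W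
  /-- MC2, two-out-of-three: right cancellation. -/
  W_cancel_right : ∀ x y z : P, x ≤ y → y ≤ z → (x, z) ∈ W → (x, y) ∈ W → (y, z) ∈ W
  /-- MC4: acyclic cofibrations lift on the left of fibrations. -/
  lift_AC_F : ∀ a b x y : P, (a, b) ∈ W → (a, b) ∈ C → (x, y) ∈ F →
    a ≤ x → b ≤ y → b ≤ x
  /-- MC4: cofibrations lift on the left of acyclic fibrations. -/
  lift_C_AF : ∀ a b x y : P, (a, b) ∈ C → (x, y) ∈ W → (x, y) ∈ F →
    a ≤ x → b ≤ y → b ≤ x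
  /-- MC5: factorization as cofibration followed by acyclic fibration. -/
  factor_C_AF : ∀ x y : P, x ≤ y →
    ∃ z, x ≤ z ∧ z ≤ y ∧ (x, z) ∈ C ∧ (z, y) ∈ W ∧ (z, y) ∈ F
  /-- MC5: factorization as acyclic cofibration followed by fibration. -/
  factor_AC_F : ∀ x y : P, x ≤ y →
    ∃ z, x ≤ z ∧ z ≤ y ∧ (x, z) ∈ W ∧ (x, z) ∈ C ∧ (z, y) ∈ F

/-- In any model structure on a poset, the weak equivalences are decomposable:
if `x ≤ y ≤ z` and `x → z` is a weak equivalence, then so are `x → y` and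
`y → z`. -/
theorem weakEquivalences_decomposable {P : Type*} [Lattice P]
    (M : LatticeModelStructure P) (x y z : P) (hxy : x ≤ y) (hyz : y ≤ z)
    (hxz : (x, z) ∈ M.W) :
    (x, y) ∈ M.W ∧ (y, z) ∈ M.W := by
  -- Factor x ≤ y as cofibration x ≤ a followed by acyclic fibration a ≤ y.
  obtain ⟨a, hxa, hay, hxaC, hayW, hayF⟩ := M.factor_C_AF x y hxy
  -- Factor a ≤ z as acyclic cofibration a ≤ b followed by fibration b ≤ z.
  obtain ⟨b, hab, hbz, habW, habC, hbzF⟩ := M.factor_AC_F a z (hay.trans hyz)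
  -- Factor x ≤ z as acyclic cofibration x ≤ c followed by fibration c ≤ z.
  obtain ⟨c, hxc, hcz, hxcW, hxcC, hczF⟩ := M.factor_AC_F x z (hxy.trans hyz)
  -- c → z is a weak equivalence by two-out-of-three.
  have hczW : (c, z) ∈ M.W := M.W_cancel_right x c z hxc hcz hxz hxcW
  -- x → b is a cofibration.
  have hxbC : (x, b) ∈ M.C := M.C_comp x a b hxaC habC
  -- Lift cofibration x → b against acyclic fibration c → z : b ≤ c.
  have hbc : b ≤ c := M.lift_C_AF x b c z hxbC hczW hczF hxc hbz
  -- Lift acyclic cofibration x → c against fibration b → z : c ≤ b.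
  have hcb : c ≤ b := M.lift_AC_F x c b z hxcW hxcC hbzF (hxa.trans hab) hcz
  have hbceq : b = c := le_antisymm hbc hcb
  -- Hence x → b is a weak equivalence.
  have hxbW : (x, b) ∈ M.W := hbceq ▸ hxcW
  -- Cancel a → b to get x → a, then compose with a → y.
  have hxaW : (x, a) ∈ M.W := M.W_cancel_left x a b hxa hab hxbW habW
  have hxyW : (x, y) ∈ M.W := M.W_comp x a y hxa hay hxaW hayW
  exact ⟨hxyW, M.W_cancel_right x y z hxy hyz hxz hxyW⟩
end

section
/- In a model structure on a finite lattice, every short (indecomposable) morphism that is not a weak equivalence is both a fibration and a cofibration. -/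
/-- In a model structure on a lattice, every short (indecomposable) morphism
that is not a weak equivalence is both a fibration and a cofibration. -/
theorem short_not_we_is_fib_and_cofib {P : Type*} [Lattice P]
    (M : LatticeModelStructure P) (x y : P) (hxy : x ≤ y)
    (hshort : ∀ z : P, x ≤ z → z ≤ y → z = x ∨ z = y)
    (hW : (x, y) ∉ M.W) :
    (x, y) ∈ M.F ∧ (x, y) ∈ M.C := by
  obtain ⟨z, hxz, hzy, hC, hWz, hFz⟩ := M.factor_C_AF x y hxy
  obtain ⟨z', hxz', hz'y, hWz', hCz', hFz'⟩ := M.factor_AC_F x y hxy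
  rcases hshort z hxz hzy with h | h
  · exact absurd (h ▸ hWz) hW
  · rcases hshort z' hxz' hz'y with h' | h'
    · exact ⟨h' ▸ hFz', h ▸ hC⟩
    · exact absurd (h' ▸ hWz') hW
end

section
/- In a model structure on a finite lattice, every short (indecomposable) morphism that is a weak equivalence is a fibration or a cofibration, but not both. -/
/-- In a model structure on a lattice, every short (indecomposable) morphism
that is a weak equivalence is a fibration or a cofibration, but not both. -/
theorem short_we_is_fib_or_cofib_not_both {P : Type*} [Lattice P]
    (M : LatticeModelStructure P) (x y : P) (hxy : x ≤ y) (hne : x ≠ y)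
    (hshort : ∀ z : P, x ≤ z → z ≤ y → z = x ∨ z = y)
    (hW : (x, y) ∈ M.W) :
    ((x, y) ∈ M.F ∨ (x, y) ∈ M.C) ∧ ¬((x, y) ∈ M.F ∧ (x, y) ∈ M.C) := by
  constructor
  · obtain ⟨z, hxz, hzy, hC, hzW, hzF⟩ := M.factor_C_AF x y hxy
    rcases hshort z hxz hzy with rfl | rfl
    · exact Or.inl hzF
    · exact Or.inr hC
  · rintro ⟨hF, hC⟩
    exact hne (le_antisymm hxy (M.lift_AC_F x y x y hW hC hF le_rfl le_rfl))
end

section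
/- In a model structure on a lattice, the acyclic fibrations form a transfer system: they contain all identities, are closed under composition, and are closed under pullback, i.e. if x → y is an acyclic fibration and z ≤ y, then x ∧ z → z is an acyclic fibration. -/
/-- In a model structure on a lattice, the acyclic fibrations `W ∩ F` form a
transfer system: they contain all identities, are closed under composition,
and are closed under pullback. -/
theorem acyclicFibrations_transferSystem {P : Type*} [Lattice P]
    (M : LatticeModelStructure P) :
    (∀ x : P, (x, x) ∈ M.W ∩ M.F) ∧
    (∀ x y z : P, (x, y) ∈ M.W ∩ M.F → (y, z) ∈ M.W ∩ M.F → (x, z) ∈ M.W ∩ M.F) ∧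
    (∀ x y z : P, (x, y) ∈ M.W ∩ M.F → z ≤ y → (x ⊓ z, z) ∈ M.W ∩ M.F) := by
  refine ⟨fun x => ⟨M.W_id x, M.F_id x⟩, ?_, ?_⟩
  · rintro x y z ⟨hw1, hf1⟩ ⟨hw2, hf2⟩
    exact ⟨M.W_comp x y z (M.F_le _ hf1) (M.F_le _ hf2) hw1 hw2,
      M.F_comp x y z hf1 hf2⟩
  · rintro x y z ⟨hw, hf⟩ hzy
    obtain ⟨m, h1, h2, hc, hmw, hmf⟩ := M.factor_C_AF (x ⊓ z) z inf_le_right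
    have hmx : m ≤ x := M.lift_C_AF (x ⊓ z) m x y hc hw hf inf_le_left (h2.trans hzy)
    have : m = x ⊓ z := le_antisymm (le_inf hmx h2) h1
    rw [← this]
    exact ⟨hmw, hmf⟩
end

section
/- On the two-dimensional grid [m] × [n], let S be a set of short arrows closed under pullbacks; if ⟨S⟩ is saturated and S consists of all short arrows of ⟨S⟩, then S satisfies the three-out-of-four square condition: whenever three of the four sides of a unit square {(i,j), (i+1,j), (i,j+1), (i+1,j+1)} belong to S, so does the fourth. -/
/-- Saturation of a transfer system. -/
def IsSaturated {L : Type*} [Lattice L] (T : Set (L × L)) : Prop :=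
  ∀ x y z : L, x ≤ y → y ≤ z → (x, y) ∈ T → (x, z) ∈ T → (y, z) ∈ T

private lemma fin_cov {k : ℕ} (x y : Fin (k + 1)) (h : (x : ℕ) + 1 = (y : ℕ)) :
    x ⋖ y := by
  constructor
  · rw [Fin.lt_def]; omega
  · intro c hc1 hc2
    rw [Fin.lt_def] at hc1 hc2
    omega

/-- Forward direction of the characterization of saturated transfer systems on
the grid `[m] × [n]` via short arrows: if `T = ⟨S⟩` is saturated and `S` is the
set of all short arrows (covering relations) of `T`, then `S` satisfies the
three-out-of-four condition on every unit square. -/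
theorem saturated_implies_three_out_of_four (m n : ℕ)
    (S T : Set ((Fin (m + 1) × Fin (n + 1)) × (Fin (m + 1) × Fin (n + 1))))
    (hT : IsTransferSystem T) (hsat : IsSaturated T)
    (hS : S = {p | p ∈ T ∧ p.1 ⋖ p.2})
    (hgen : ∀ T', IsTransferSystem T' → S ⊆ T' → T ⊆ T') :
    ∀ (i : Fin (m + 1)) (j : Fin (n + 1)) (hi : (i : ℕ) < m) (hj : (j : ℕ) < n),
      ∀ i' j', i' = (⟨i + 1, by omega⟩ : Fin (m + 1)) →
        j' = (⟨j + 1, by omega⟩ : Fin (n + 1)) →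
      (((i, j), (i', j)) ∈ S → ((i, j), (i, j')) ∈ S → ((i', j), (i', j')) ∈ S →
          ((i, j'), (i', j')) ∈ S) ∧
      (((i, j), (i', j)) ∈ S → ((i, j), (i, j')) ∈ S → ((i, j'), (i', j')) ∈ S →
          ((i', j), (i', j')) ∈ S) ∧
      (((i, j), (i', j)) ∈ S → ((i', j), (i', j')) ∈ S → ((i, j'), (i', j')) ∈ S →
          ((i, j), (i, j')) ∈ S) ∧
      (((i, j), (i, j')) ∈ S → ((i', j), (i', j')) ∈ S → ((i, j'), (i', j')) ∈ S →
          ((i, j), (i', j)) ∈ S) := by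
  intro i j hi hj i' j' hi' hj'
  obtain ⟨hle, hrefl, htrans, hpull⟩ := hT
  subst hS
  -- basic coordinate facts
  have hii' : (i : ℕ) + 1 = (i' : ℕ) := by subst hi'; simp
  have hjj' : (j : ℕ) + 1 = (j' : ℕ) := by subst hj'; simp
  have hiI : i ≤ i' := by rw [Fin.le_def]; omega
  have hjJ : j ≤ j' := by rw [Fin.le_def]; omega
  have covI : i ⋖ i' := fin_cov i i' hii'
  have covJ : j ⋖ j' := fin_cov j j' hjj'
  -- coverings of the four edges
  have covBot : ((i, j) : Fin (m+1) × Fin (n+1)) ⋖ (i', j) :=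
    Prod.mk_covBy_mk_iff_left.2 covI
  have covTop : ((i, j') : Fin (m+1) × Fin (n+1)) ⋖ (i', j') :=
    Prod.mk_covBy_mk_iff_left.2 covI
  have covLeft : ((i, j) : Fin (m+1) × Fin (n+1)) ⋖ (i, j') :=
    Prod.mk_covBy_mk_iff_right.2 covJ
  have covRight : ((i', j) : Fin (m+1) × Fin (n+1)) ⋖ (i', j') :=
    Prod.mk_covBy_mk_iff_right.2 covJ
  -- order facts
  have hxb : ((i, j) : Fin (m+1) × Fin (n+1)) ≤ (i, j') := ⟨le_refl _, hjJ⟩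
  have hxa : ((i, j) : Fin (m+1) × Fin (n+1)) ≤ (i', j) := ⟨hiI, le_refl _⟩
  have hby : ((i, j') : Fin (m+1) × Fin (n+1)) ≤ (i', j') := ⟨hiI, le_refl _⟩
  have hay : ((i', j) : Fin (m+1) × Fin (n+1)) ≤ (i', j') := ⟨le_refl _, hjJ⟩
  refine ⟨?_, ?_, ?_, ?_⟩
  · -- bottom, left, right ⊢ top
    rintro ⟨hb, -⟩ ⟨hl, -⟩ ⟨hr, -⟩
    have hxy : ((i, j), ((i', j') : Fin (m+1) × Fin (n+1))) ∈ T := htrans _ _ _ hb hr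
    exact ⟨hsat _ _ _ hxb hby hl hxy, covTop⟩
  · -- bottom, left, top ⊢ right
    rintro ⟨hb, -⟩ ⟨hl, -⟩ ⟨ht, -⟩
    have hxy : ((i, j), ((i', j') : Fin (m+1) × Fin (n+1))) ∈ T := htrans _ _ _ hl ht
    exact ⟨hsat _ _ _ hxa hay hb hxy, covRight⟩
  · -- bottom, right, top ⊢ left
    rintro ⟨hb, -⟩ ⟨hr, -⟩ ⟨-, -⟩
    have hxy : ((i, j), ((i', j') : Fin (m+1) × Fin (n+1))) ∈ T := htrans _ _ _ hb hr
    have := hpull _ _ _ hxy hby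
    rw [inf_eq_left.2 hxb] at this
    exact ⟨this, covLeft⟩
  · -- left, right, top ⊢ bottom
    rintro ⟨hl, -⟩ ⟨-, -⟩ ⟨ht, -⟩
    have := hpull _ _ _ ht hay
    have hinf : ((i, j') : Fin (m+1) × Fin (n+1)) ⊓ (i', j) = (i, j) := by
      refine Prod.ext ?_ ?_ <;> simp [Prod.inf_def, inf_eq_left.2 hiI, inf_eq_right.2 hjJ]
    rw [hinf] at this
    exact ⟨this, covBot⟩
end
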